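/- arXiv:1204.1163 — 3 statements merged into one kernel-verified Lean document; each statement's English description precedes it below -/
import Mathlib

section
/- Let G be a locally compact, second-countable topological group (this covers the paper's setting of a connected complex Lie group). Let Γ ⊆ G be a discrete subgroup and let H₁ ⊆ H₂ be closed connected subgroups of G such that Γ normalizes both H₁ and H₂ (so that the product sets Γ·H₁ and Γ·H₂ are subgroups of G). If the set Γ·H₂ is closed in G and the set (Γ ∩ H₂)·H₁ is closed in G (equivalently, closed in H₂, since H₂ is closed in G), then the set Γ·H₁ is closed in G. -/
open Pointwise

/-!
`Γ` is countable, being discrete in a second-countable space. The closed set `Γ·H₂` is locally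
compact, hence a Baire space, and it is covered by the countably many closed cosets `γ·H₂`; so
`H₂` is open in `Γ·H₂`. Near `H₂`, the subset `Γ·H₁ ⊆ Γ·H₂` therefore agrees with
`Γ·H₁ ∩ H₂ = (Γ ∩ H₂)·H₁`, which is closed, so `closure (Γ·H₁) ∩ H₂ ⊆ Γ·H₁`. Every point of
`closure (Γ·H₁) ⊆ Γ·H₂` is a `Γ`-translate of such a point, and `Γ·H₁` is `Γ`-invariant.
-/

section

variable {G : Type*} [Group G]

namespace Subgroup

theorem smul_coe_mul_eq {Γ : Subgroup G} {γ : G} (hγ : γ ∈ Γ) (B : Set G) :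
    γ • ((Γ : Set G) * B) = (Γ : Set G) * B := by
  rw [← smul_mul_assoc, smul_coe_set hγ]

theorem countable_quotient_subgroupOf_sup {Γ H : Subgroup G} [Countable Γ]
    (hΓ : Γ ≤ normalizer (H : Set G)) : Countable (↥(Γ ⊔ H) ⧸ H.subgroupOf (Γ ⊔ H)) := by
  refine Function.Surjective.countable
    (f := fun γ : Γ ↦ ((inclusion le_sup_left γ : ↥(Γ ⊔ H)) : ↥(Γ ⊔ H) ⧸ H.subgroupOf (Γ ⊔ H)))
    ?_
  rintro ⟨k, hk⟩
  obtain ⟨γ, hγ, h, hh, rfl⟩ : k ∈ (Γ : Set G) * H := by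
    rwa [← coe_mul_of_left_le_normalizer_right Γ H hΓ]
  refine ⟨⟨γ, hγ⟩, QuotientGroup.eq.2 ?_⟩
  simpa [mem_subgroupOf] using hh

variable [TopologicalSpace G] [IsTopologicalGroup G]

theorem isOpen_of_isClosed_of_countable_quotient [BaireSpace G] {H : Subgroup G}
    [Countable (G ⧸ H)] (hH : IsClosed (H : Set G)) : IsOpen (H : Set G) := by
  have hcover : ⋃ q : G ⧸ H, Quotient.out q • (H : Set G) = Set.univ := by
    refine Set.eq_univ_of_forall fun g ↦ Set.mem_iUnion.2 ⟨(g : G ⧸ H), ?_⟩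
    obtain ⟨h, hh⟩ := QuotientGroup.mk_out_eq_mul H g
    exact ⟨h⁻¹, H.inv_mem h.2, by simp [hh]⟩
  obtain ⟨q, x, hx⟩ :=
    nonempty_interior_of_iUnion_of_closed (fun q : G ⧸ H ↦ hH.smul (Quotient.out q)) hcover
  rw [interior_smul] at hx
  obtain ⟨y, hy, -⟩ := hx
  exact H.isOpen_of_mem_nhds (mem_interior_iff_mem_nhds.1 hy)

theorem exists_isOpen_inter_mul_eq [LocallyCompactSpace G] {Γ H : Subgroup G} [Countable Γ]
    (hΓ : Γ ≤ normalizer (H : Set G)) (hH : IsClosed (H : Set G))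
    (hΓH : IsClosed ((Γ : Set G) * (H : Set G))) :
    ∃ W : Set G, IsOpen W ∧ W ∩ ((Γ : Set G) * (H : Set G)) = H := by
  have hK : ((Γ ⊔ H : Subgroup G) : Set G) = (Γ : Set G) * H :=
    coe_mul_of_left_le_normalizer_right Γ H hΓ
  have : LocallyCompactSpace ↥(Γ ⊔ H) := (hK ▸ hΓH : IsClosed _).locallyCompactSpace
  have := countable_quotient_subgroupOf_sup hΓ
  have hopen : IsOpen (H.subgroupOf (Γ ⊔ H) : Set ↥(Γ ⊔ H)) :=
    isOpen_of_isClosed_of_countable_quotient (hH.preimage continuous_subtype_val)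
  obtain ⟨W, hW, hWH⟩ := isOpen_induced_iff.1 hopen
  have hWK : ((Γ ⊔ H : Subgroup G) : Set G) ∩ W = ((Γ ⊔ H : Subgroup G) : Set G) ∩ H :=
    Subtype.preimage_coe_eq_preimage_coe_iff.1 (hWH.trans (coe_subgroupOf H (Γ ⊔ H)))
  refine ⟨W, hW, ?_⟩
  rw [Set.inter_comm, ← hK, hWK, Set.inter_eq_right.2 (le_sup_right : H ≤ Γ ⊔ H)]

end Subgroup

variable [TopologicalSpace G]

theorem closure_mul_inter_subset_of_isOpen_inter {Γ H₁ H₂ : Subgroup G} (h12 : H₁ ≤ H₂)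
    {W : Set G} (hW : IsOpen W) (hWH₂ : W ∩ ((Γ : Set G) * (H₂ : Set G)) = H₂) :
    closure ((Γ : Set G) * (H₁ : Set G)) ∩ H₂ ⊆
      closure (((Γ : Set G) ∩ H₂) * (H₁ : Set G)) := by
  have hsub : (Γ : Set G) * (H₁ : Set G) ⊆ (Γ : Set G) * (H₂ : Set G) :=
    Set.mul_subset_mul_left h12
  have hH₂W : (H₂ : Set G) ⊆ W := hWH₂ ▸ Set.inter_subset_left
  have hW_inter : W ∩ ((Γ : Set G) * (H₁ : Set G)) = ((Γ : Set G) ∩ H₂) * (H₁ : Set G) := by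
    rw [← Set.inter_eq_right.2 hsub, ← Set.inter_assoc, hWH₂,
      ← Subgroup.inf_mul_assoc H₂ Γ H₁ h12, Subgroup.coe_inf, Set.inter_comm]
  calc closure ((Γ : Set G) * (H₁ : Set G)) ∩ H₂
      ⊆ W ∩ closure ((Γ : Set G) * (H₁ : Set G)) := fun x hx ↦ ⟨hH₂W hx.2, hx.1⟩
    _ ⊆ closure (W ∩ ((Γ : Set G) * (H₁ : Set G))) := hW.inter_closure
    _ = closure (((Γ : Set G) ∩ H₂) * (H₁ : Set G)) := by rw [hW_inter]

end

theorem closed_product_of_discrete_and_closed_subgroups_general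
    {G : Type*} [Group G] [TopologicalSpace G] [IsTopologicalGroup G]
    [LocallyCompactSpace G] [SecondCountableTopology G]
    (Γ H₁ H₂ : Subgroup G)
    (hΓdisc : DiscreteTopology Γ)
    (hH₂closed : IsClosed (H₂ : Set G))
    (h12 : H₁ ≤ H₂)
    (hnorm₂ : Γ ≤ Subgroup.normalizer (H₂ : Set G))
    (hΓH₂ : IsClosed ((Γ : Set G) * (H₂ : Set G)))
    (hinter : IsClosed (((Γ : Set G) ∩ (H₂ : Set G)) * (H₁ : Set G))) :
    IsClosed ((Γ : Set G) * (H₁ : Set G)) := by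
  have : Countable Γ := TopologicalSpace.separableSpace_iff_countable.1 inferInstance
  obtain ⟨W, hW, hWH₂⟩ := Subgroup.exists_isOpen_inter_mul_eq hnorm₂ hH₂closed hΓH₂
  refine closure_subset_iff_isClosed.1 fun x hx ↦ ?_
  obtain ⟨γ, hγ, h, hh, rfl⟩ : x ∈ (Γ : Set G) * (H₂ : Set G) :=
    hΓH₂.closure_subset_iff.2 (Set.mul_subset_mul_left h12) hx
  have hh_closure : h ∈ closure ((Γ : Set G) * (H₁ : Set G)) := by
    rw [← Subgroup.smul_coe_mul_eq (Γ.inv_mem hγ), closure_smul]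
    exact ⟨γ * h, hx, by simp⟩
  have hh_mem : h ∈ ((Γ : Set G) ∩ H₂) * (H₁ : Set G) :=
    hinter.closure_subset (closure_mul_inter_subset_of_isOpen_inter h12 hW hWH₂ ⟨hh_closure, hh⟩)
  rw [← Subgroup.smul_coe_mul_eq hγ]
  exact Set.smul_mem_smul_set (Set.mul_subset_mul_right Set.inter_subset_left hh_mem)

/-- Lemma 8.3: Let `G` be a locally compact, second-countable topological group,
`Γ` a discrete subgroup, and `H₁ ⊆ H₂` closed connected subgroups normalized by `Γ`.
If `Γ·H₂` is closed in `G` and `(Γ ∩ H₂)·H₁` is closed in `G`, then `Γ·H₁` is closed. -/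
theorem closed_product_of_discrete_and_closed_subgroups
    {G : Type*} [Group G] [TopologicalSpace G] [IsTopologicalGroup G]
    [LocallyCompactSpace G] [SecondCountableTopology G]
    (Γ H₁ H₂ : Subgroup G)
    (hΓdisc : DiscreteTopology Γ)
    (hH₁closed : IsClosed (H₁ : Set G)) (hH₂closed : IsClosed (H₂ : Set G))
    (hH₁conn : IsConnected (H₁ : Set G)) (hH₂conn : IsConnected (H₂ : Set G))
    (h12 : H₁ ≤ H₂)
    (hnorm₁ : Γ ≤ Subgroup.normalizer (H₁ : Set G)) (hnorm₂ : Γ ≤ Subgroup.normalizer (H₂ : Set G))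
    (hΓH₂ : IsClosed ((Γ : Set G) * (H₂ : Set G)))
    (hinter : IsClosed (((Γ : Set G) ∩ (H₂ : Set G)) * (H₁ : Set G))) :
    IsClosed ((Γ : Set G) * (H₁ : Set G)) :=
  closed_product_of_discrete_and_closed_subgroups_general Γ H₁ H₂ hΓdisc hH₂closed h12 hnorm₂ hΓH₂
    hinter
end

section
/- Let X and Y be Hausdorff topological spaces and let p : X → Y be a continuous, open, surjective map. Let ρ : X → ℝ be a continuous exhaustion, i.e., the sublevel set {x ∈ X : ρ(x) ≤ c} is compact for every c ∈ ℝ. Define ρ_Y : Y → ℝ by ρ_Y(y) = inf { ρ(x) : x ∈ p⁻¹(y) }. Then: (a) for every y ∈ Y the infimum is attained, i.e., there exists x ∈ p⁻¹(y) with ρ(x) = ρ_Y(y) (in particular ρ_Y is real-valued); and (b) ρ_Y is continuous on Y. -/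
/-!
Fix `y` and a point `x₀` over it. Outside the compact set `{ρ ≤ ρ x₀}` we have
`ρ > ρ x₀`, so `ρ` attains its minimum on the closed fiber `p ⁻¹' {y}`. Once `ρ_Y`
is a fiberwise minimum, it pulls back lower sets to images: `{ρ_Y < c} = p '' {ρ < c}`
is open since `p` is open, and `{ρ_Y ≤ c} = p '' {ρ ≤ c}` is closed as the image of
a compact set. Hence `ρ_Y` is both upper and lower semicontinuous.
-/

open Set Filter

section

variable {X Y α : Type*} {p : X → Y} {ρ : X → α} {ρY : Y → α}

theorem preimage_eq_image_preimage_of_isLeast_image_fiber [Preorder α]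
    (hmin : ∀ y, IsLeast (ρ '' (p ⁻¹' {y})) (ρY y)) {t : Set α} (ht : IsLowerSet t) :
    ρY ⁻¹' t = p '' (ρ ⁻¹' t) := by
  ext y
  constructor
  · intro hy
    obtain ⟨x, hx, hxy⟩ := (hmin y).1
    exact ⟨x, show ρ x ∈ t from hxy ▸ hy, hx⟩
  · rintro ⟨x, hx, rfl⟩
    exact ht ((hmin (p x)).2 ⟨x, rfl, rfl⟩) hx

variable [TopologicalSpace X] [TopologicalSpace Y]

theorem IsClosed.exists_isMinOn_of_isCompact_sublevel [LinearOrder α] [TopologicalSpace α]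
    [ClosedIicTopology α] (hρ : Continuous ρ)
    (hexh : ∀ c : α, IsCompact {x : X | ρ x ≤ c}) {s : Set X} (hs : IsClosed s)
    (hne : s.Nonempty) : ∃ x ∈ s, IsMinOn ρ s x := by
  obtain ⟨x₀, hx₀⟩ := hne
  refine hρ.continuousOn.exists_isMinOn' hs hx₀ ?_
  filter_upwards [mem_inf_of_left (hexh (ρ x₀)).compl_mem_cocompact] with x hx
  exact (not_le.mp hx).le

theorem exists_isLeast_image_fiber [T1Space Y] [LinearOrder α] [TopologicalSpace α]
    [ClosedIicTopology α] (hpc : Continuous p) (hps : Function.Surjective p)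
    (hρ : Continuous ρ) (hexh : ∀ c : α, IsCompact {x : X | ρ x ≤ c}) (y : Y) :
    ∃ x, p x = y ∧ IsLeast (ρ '' (p ⁻¹' {y})) (ρ x) := by
  obtain ⟨x, hx, hmin⟩ := (isClosed_singleton.preimage hpc).exists_isMinOn_of_isCompact_sublevel
    hρ hexh (hps y)
  exact ⟨x, hx, mem_image_of_mem ρ hx, forall_mem_image.2 hmin⟩

theorem upperSemicontinuous_of_isLeast_image_fiber [Preorder α] (hpo : IsOpenMap p)
    (hρ : UpperSemicontinuous ρ) (hmin : ∀ y, IsLeast (ρ '' (p ⁻¹' {y})) (ρY y)) :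
    UpperSemicontinuous ρY := by
  refine upperSemicontinuous_iff_isOpen_preimage.2 fun c ↦ ?_
  rw [preimage_eq_image_preimage_of_isLeast_image_fiber hmin (isLowerSet_Iio c)]
  exact hpo _ (hρ.isOpen_preimage c)

theorem lowerSemicontinuous_of_isLeast_image_fiber [T2Space Y] [LinearOrder α]
    (hpc : Continuous p) (hexh : ∀ c : α, IsCompact {x : X | ρ x ≤ c})
    (hmin : ∀ y, IsLeast (ρ '' (p ⁻¹' {y})) (ρY y)) : LowerSemicontinuous ρY := by
  refine lowerSemicontinuous_iff_isOpen_preimage.2 fun c ↦ ?_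
  rw [← compl_Iic, preimage_compl,
    preimage_eq_image_preimage_of_isLeast_image_fiber hmin (isLowerSet_Iic c)]
  exact ((hexh c).image hpc).isClosed.isOpen_compl

theorem continuous_of_isLeast_image_fiber [T2Space Y] [LinearOrder α] [TopologicalSpace α]
    [OrderTopology α] (hpc : Continuous p) (hpo : IsOpenMap p) (hρ : Continuous ρ)
    (hexh : ∀ c : α, IsCompact {x : X | ρ x ≤ c})
    (hmin : ∀ y, IsLeast (ρ '' (p ⁻¹' {y})) (ρY y)) : Continuous ρY :=
  continuous_iff_lower_upperSemicontinuous.2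
    ⟨lowerSemicontinuous_of_isLeast_image_fiber hpc hexh hmin,
      upperSemicontinuous_of_isLeast_image_fiber hpo hρ.upperSemicontinuous hmin⟩

end

theorem pushdown_exhaustion_attained_and_continuous_general
    {X Y : Type*} [TopologicalSpace X] [TopologicalSpace Y] [T2Space Y]
    (p : X → Y) (hpc : Continuous p) (hpo : IsOpenMap p) (hps : Function.Surjective p)
    (ρ : X → ℝ) (hρc : Continuous ρ)
    (hexh : ∀ c : ℝ, IsCompact {x : X | ρ x ≤ c})
    (ρY : Y → ℝ) (hρY : ∀ y : Y, ρY y = sInf (ρ '' (p ⁻¹' {y}))) :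
    (∀ y : Y, ∃ x : X, p x = y ∧ ρ x = ρY y) ∧ Continuous ρY := by
  have hmin : ∀ y, IsLeast (ρ '' (p ⁻¹' {y})) (ρY y) := fun y ↦ by
    obtain ⟨x, -, hx⟩ := exists_isLeast_image_fiber hpc hps hρc hexh y
    rwa [hρY, hx.csInf_eq]
  exact ⟨fun y ↦ (hmin y).1, continuous_of_isLeast_image_fiber hpc hpo hρc hexh hmin⟩

/-- Pushing down a continuous exhaustion along a continuous open surjection:
the fiberwise infimum is attained and defines a continuous function on the base. -/
theorem pushdown_exhaustion_attained_and_continuous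
    {X Y : Type*} [TopologicalSpace X] [TopologicalSpace Y] [T2Space X] [T2Space Y]
    (p : X → Y) (hpc : Continuous p) (hpo : IsOpenMap p) (hps : Function.Surjective p)
    (ρ : X → ℝ) (hρc : Continuous ρ)
    (hexh : ∀ c : ℝ, IsCompact {x : X | ρ x ≤ c})
    (ρY : Y → ℝ) (hρY : ∀ y : Y, ρY y = sInf (ρ '' (p ⁻¹' {y}))) :
    (∀ y : Y, ∃ x : X, p x = y ∧ ρ x = ρY y) ∧ Continuous ρY :=
  pushdown_exhaustion_attained_and_continuous_general p hpc hpo hps ρ hρc hexh ρY hρY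
end

section
/- Let 𝔤 be a Lie algebra over ℂ which is perfect, i.e., [𝔤, 𝔤] = 𝔤, and let 𝔩 be a real Lie subalgebra of 𝔤 (viewing 𝔤 as a real Lie algebra by restriction of scalars) satisfying: (i) 𝔩 is an ideal of 𝔤, i.e., [x, y] ∈ 𝔩 for all x ∈ 𝔤 and y ∈ 𝔩; and (ii) 𝔩 + i·𝔩 = 𝔤, where i·𝔩 = { i•x : x ∈ 𝔩 }. Then 𝔩 = 𝔤. -/
/-!
Let `N` be the largest complex subspace contained in `l`, i.e. the vectors whose whole complex
line lies in `l`. Since `l` is a real ideal, `c • ⁅a, y⁆ = ⁅c • a, y⁆ ∈ l` for `y ∈ l`, so every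
bracket with an element of `l` lies in `N`; by complex linearity so does every bracket with an
element of `l + i·l = g`. Hence `[g, g] ⊆ N`, and perfectness gives `g = N ⊆ l`.
-/

namespace Submodule

variable {R M : Type*} [Semiring R] [AddCommMonoid M] [Module R M]

def smulCore (A : Type*) [Semiring A] [Module A M] (l : Submodule R M) : Submodule A M where
  carrier := {w | ∀ c : A, c • w ∈ l}
  add_mem' hx hy c := by
    rw [smul_add]
    exact l.add_mem (hx c) (hy c)
  zero_mem' c := by simp
  smul_mem' c' w hw c := by
    rw [smul_smul]
    exact hw (c * c')

theorem mem_of_mem_smulCore {A : Type*} [Semiring A] [Module A M] {l : Submodule R M} {w : M}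
    (hw : w ∈ l.smulCore A) : w ∈ l := by
  simpa using hw 1

end Submodule

open Submodule

theorem lie_mem_smulCore_of_mem_span {R A L : Type*} [Semiring R] [CommRing A]
    [LieRing L] [LieAlgebra A L] [Module R L] {l : Submodule R L}
    (hideal : ∀ x : L, ∀ y ∈ l, ⁅x, y⁆ ∈ l) (x : L) {y : L} (hy : y ∈ span A (l : Set L)) :
    ⁅x, y⁆ ∈ l.smulCore A := by
  induction hy using Submodule.span_induction with
  | mem y hy => exact fun c => by simpa only [smul_lie] using hideal (c • x) y hy
  | zero => simp
  | add y₁ y₂ _ _ h₁ h₂ => simpa only [lie_add] using add_mem h₁ h₂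
  | smul c y _ h => simpa only [lie_smul] using smul_mem _ c h

theorem eq_top_of_lie_mem_of_span_eq_top {R A L : Type*} [Semiring R] [CommRing A]
    [LieRing L] [LieAlgebra A L] [Module R L]
    (hperfect : span A {z : L | ∃ a b : L, ⁅a, b⁆ = z} = ⊤) {l : Submodule R L}
    (hideal : ∀ x : L, ∀ y ∈ l, ⁅x, y⁆ ∈ l) (hspan : span A (l : Set L) = ⊤) :
    l = ⊤ := by
  have hcore : l.smulCore A = ⊤ := by
    refine top_le_iff.mp (hperfect ▸ span_le.mpr ?_)
    rintro _ ⟨a, b, rfl⟩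
    exact lie_mem_smulCore_of_mem_span hideal a (hspan ▸ mem_top)
  exact eq_top_iff.mpr fun z _ => mem_of_mem_smulCore (hcore ▸ mem_top)

/-- If `g` is a perfect complex Lie algebra and `l` is a real Lie subalgebra which is
an ideal of `g` and satisfies `l + i·l = g`, then `l = g`. -/
theorem real_ideal_with_full_complexification_eq_top
    {g : Type*} [LieRing g] [LieAlgebra ℂ g]
    (hperfect : Submodule.span ℂ {z : g | ∃ a b : g, ⁅a, b⁆ = z} = ⊤)
    (l : Submodule ℝ g)
    (hideal : ∀ x : g, ∀ y ∈ l, ⁅x, y⁆ ∈ l)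
    (hsum : ∀ z : g, ∃ a ∈ l, ∃ b ∈ l, z = a + Complex.I • b) :
    ∀ z : g, z ∈ l := by
  have hspan : span ℂ (l : Set g) = ⊤ := by
    refine eq_top_iff.mpr fun z _ => ?_
    obtain ⟨a, ha, b, hb, rfl⟩ := hsum z
    exact add_mem (subset_span ha) (smul_mem _ _ (subset_span hb))
  intro z
  rw [eq_top_of_lie_mem_of_span_eq_top hperfect hideal hspan]
  exact mem_top
end
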